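/- Let τ be a regular mapping and let Γ(τ) = {I = i_1⋯i_{|I|} ∈ Σ_q^* : i_{|I|} ≠ 0} ∪ {0} (the set of base-q representations of all nonnegative integers, with 0 represented by the single-letter word 0). Then the map τ* restricted to Γ(τ) is a bijection from Γ(τ) onto Λ(τ). -/

import Mathlib

open Filter Set
open scoped ENNReal NNReal

/-- The upper `r`-Beurling density of a set `Λ ⊆ ℝ`:
`D_r^+(Λ) = limsup_{h→∞} sup_{x∈ℝ} #(Λ ∩ (x−h, x+h)) / h^r`. -/
noncomputable def beurlingDensityPlus (r : ℝ) (Λ : Set ℝ) : ℝ≥0∞ :=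
  Filter.limsup
    (fun h : ℝ => ⨆ x : ℝ, ((Λ ∩ Set.Ioo (x - h) (x + h)).encard : ℝ≥0∞) / ENNReal.ofReal (h ^ r))
    Filter.atTop

/-- `wTake I k` is the word `I_{1,k}`: the first `k` letters of `I`, padded with `0`s if `k > |I|`. -/
def wTake (I : List ℕ) (k : ℕ) : List ℕ := (I ++ List.replicate k 0).take k

/-- `τ : Σ_q^* → {-1,0,…,p-2}` is a regular mapping (words are modelled as nonempty lists of
naturals `< q`): (i) `τ(0^n) = 0`; (ii) `τ(I) ∈ {-1,…,p-2}` and `τ(I) ≡ i_n (mod q)` where `i_n`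
is the last letter of `I`; (iii) for every word `I`, `τ(I0^l) = 0` for all sufficiently large `l`. -/
def IsRegularMap (p q : ℕ) (τ : List ℕ → ℤ) : Prop :=
  (∀ n : ℕ, 1 ≤ n → τ (List.replicate n 0) = 0) ∧
  (∀ I : List ℕ, I ≠ [] → (∀ i ∈ I, i < q) →
    (-1 ≤ τ I ∧ τ I ≤ (p : ℤ) - 2 ∧ (q : ℤ) ∣ (τ I - (I.getLast! : ℤ)))) ∧
  (∀ I : List ℕ, I ≠ [] → (∀ i ∈ I, i < q) →
    ∃ L : ℕ, ∀ l : ℕ, L ≤ l → τ (I ++ List.replicate l 0) = 0)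

/-- `τ*(I) = Σ_{k ≥ 1} τ(I_{1,k}) p^{k-1}` (a finite sum for regular `τ`). -/
noncomputable def tauStar (p : ℕ) (τ : List ℕ → ℤ) (I : List ℕ) : ℤ :=
  ∑ᶠ k : ℕ, τ (wTake I (k + 1)) * (p : ℤ) ^ k

/-- The maximal orthogonal set `Λ(τ) = {τ*(I) : I ∈ Σ_q^*} ∪ {0}`, viewed as a subset of `ℝ`. -/
def LambdaTau (p q : ℕ) (τ : List ℕ → ℤ) : Set ℝ :=
  {x : ℝ | ∃ I : List ℕ, I ≠ [] ∧ (∀ i ∈ I, i < q) ∧ x = (tauStar p τ I : ℝ)} ∪ {0}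

/-- `Γ(τ) = {I ∈ Σ_q^* : last letter of I is nonzero} ∪ {0}` — the set of base-`q`
representations of the nonnegative integers (with `0` represented by the one-letter word `0`). -/
def GammaTau (q : ℕ) : Set (List ℕ) :=
  {I | I ≠ [] ∧ (∀ i ∈ I, i < q) ∧ I.getLast! ≠ 0} ∪ {[0]}

section Aux

lemma wTake_length (I : List ℕ) (k : ℕ) : (wTake I k).length = k := by
  simp only [wTake, List.length_take, List.length_append, List.length_replicate]
  omega

lemma wTake_ne_nil (I : List ℕ) (k : ℕ) : wTake I (k + 1) ≠ [] := by
  intro h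
  have := wTake_length I (k + 1)
  rw [h] at this; simp at this

lemma wTake_of_le (I : List ℕ) {k : ℕ} (h : I.length ≤ k) :
    wTake I k = I ++ List.replicate (k - I.length) 0 := by
  unfold wTake
  rw [List.take_append, List.take_of_length_le h, List.take_replicate]
  congr 2
  omega

lemma wTake_zeros (m k : ℕ) : wTake (List.replicate m 0) k = List.replicate k 0 := by
  unfold wTake
  rw [← List.replicate_add, List.take_replicate]
  congr 1
  omega

lemma mem_wTake {I : List ℕ} {i k : ℕ} (h : i ∈ wTake I k) : i ∈ I ∨ i = 0 := by
  unfold wTake at h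
  rcases List.mem_append.mp (List.mem_of_mem_take h) with h | h
  · exact Or.inl h
  · exact Or.inr (List.eq_of_mem_replicate h)

lemma getD_wTake (I : List ℕ) (k : ℕ) : (wTake I (k + 1)).getD k 0 = I.getD k 0 := by
  have hk : k < (wTake I (k + 1)).length := by rw [wTake_length]; omega
  rw [List.getD_eq_getElem _ _ hk]
  unfold wTake
  show (List.take (k + 1) (I ++ List.replicate (k + 1) 0))[k]'(by simpa [wTake] using hk) = I.getD k 0
  rw [List.getElem_take]
  by_cases h : k < I.length
  · rw [List.getElem_append_left h, List.getD_eq_getElem _ _ h]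
  · rw [List.getElem_append_right (by omega), List.getElem_replicate,
      List.getD_eq_default _ _ (by omega)]

lemma getLast!_eq_getD (l : List ℕ) (h : l ≠ []) : l.getLast! = l.getD (l.length - 1) 0 := by
  have hlen : 0 < l.length := List.length_pos_iff.mpr h
  rw [List.getLast!_eq_getElem!, getElem!_pos l _ (by omega), List.getD_eq_getElem _ _ (by omega)]

lemma getLast!_wTake (I : List ℕ) (k : ℕ) : (wTake I (k + 1)).getLast! = I.getD k 0 := by
  rw [getLast!_eq_getD _ (wTake_ne_nil I k), wTake_length]
  simpa using getD_wTake I k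

variable {p q : ℕ} {τ : List ℕ → ℤ}

lemma coef_spec (hτ : IsRegularMap p q τ) (hq : 2 ≤ q) {I : List ℕ} (hI : I ≠ [])
    (hIq : ∀ i ∈ I, i < q) (k : ℕ) :
    -1 ≤ τ (wTake I (k + 1)) ∧ τ (wTake I (k + 1)) ≤ (p : ℤ) - 2 ∧
      (q : ℤ) ∣ τ (wTake I (k + 1)) - (I.getD k 0 : ℤ) := by
  have hmem : ∀ i ∈ wTake I (k + 1), i < q := fun i hi =>
    (mem_wTake hi).elim (hIq i) (fun h => by omega)
  obtain ⟨h1, h2, h3⟩ := hτ.2.1 _ (wTake_ne_nil I k) hmem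
  rw [getLast!_wTake] at h3
  exact ⟨h1, h2, h3⟩

lemma exists_bound (hτ : IsRegularMap p q τ) {I : List ℕ} (hI : I ≠ [])
    (hIq : ∀ i ∈ I, i < q) :
    ∃ N : ℕ, I.length ≤ N ∧ ∀ k, N ≤ k → τ (wTake I (k + 1)) = 0 := by
  obtain ⟨L, hL⟩ := hτ.2.2 I hI hIq
  refine ⟨I.length + L, by omega, fun k hk => ?_⟩
  rw [wTake_of_le I (by omega)]
  exact hL _ (by omega)

lemma tauStar_eq_sum {I : List ℕ} {N : ℕ} (h : ∀ k, N ≤ k → τ (wTake I (k + 1)) = 0) :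
    tauStar p τ I = ∑ k ∈ Finset.range N, τ (wTake I (k + 1)) * (p : ℤ) ^ k := by
  apply finsum_eq_sum_of_support_subset
  intro k hk
  simp only [Function.mem_support] at hk
  simp only [Finset.coe_range, Set.mem_Iio]
  by_contra hkN
  exact hk (by rw [h k (by omega)]; ring)

lemma tauStar_zeros (hτ : IsRegularMap p q τ) (m : ℕ) (hm : 1 ≤ m) :
    tauStar p τ (List.replicate m 0) = 0 := by
  have h : ∀ k : ℕ, τ (wTake (List.replicate m 0) (k + 1)) * (p : ℤ) ^ k = 0 := fun k => by
    rw [wTake_zeros, hτ.1 _ (by omega)]; ring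
  rw [tauStar, finsum_congr h, finsum_zero]

lemma tauStar_single_zero (hτ : IsRegularMap p q τ) : tauStar p τ [0] = 0 := by
  have : ([0] : List ℕ) = List.replicate 1 0 := rfl
  rw [this, tauStar_zeros hτ 1 le_rfl]

lemma wTake_append_zeros (I : List ℕ) (l k : ℕ) :
    wTake (I ++ List.replicate l 0) k = wTake I k := by
  unfold wTake
  rw [List.append_assoc, ← List.replicate_add, List.take_append,
    List.take_append, List.take_replicate, List.take_replicate]
  congr 2
  omega

lemma tauStar_append_zeros (I : List ℕ) (l : ℕ) :
    tauStar p τ (I ++ List.replicate l 0) = tauStar p τ I := by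
  unfold tauStar
  exact finsum_congr fun k => by rw [wTake_append_zeros]

lemma digits_unique {p : ℕ} (hp : 2 ≤ p) :
    ∀ (N : ℕ) (a b : ℕ → ℤ), (∀ k, -1 ≤ a k ∧ a k ≤ (p : ℤ) - 2) →
      (∀ k, -1 ≤ b k ∧ b k ≤ (p : ℤ) - 2) →
      (∑ k ∈ Finset.range N, a k * (p : ℤ) ^ k = ∑ k ∈ Finset.range N, b k * (p : ℤ) ^ k) →
      ∀ k < N, a k = b k := by
  intro N
  induction N with
  | zero => intro a b _ _ _ k hk; omega
  | succ n ih =>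
    intro a b ha hb hsum k hk
    rw [Finset.sum_range_succ', Finset.sum_range_succ'] at hsum
    have e1 : ∀ c : ℕ → ℤ, (∑ i ∈ Finset.range n, c (i + 1) * (p : ℤ) ^ (i + 1)) =
        (∑ i ∈ Finset.range n, c (i + 1) * (p : ℤ) ^ i) * p := by
      intro c
      rw [Finset.sum_mul]
      exact Finset.sum_congr rfl fun i _ => by ring
    rw [e1 a, e1 b] at hsum
    simp only [pow_zero, mul_one] at hsum
    set A := ∑ i ∈ Finset.range n, a (i + 1) * (p : ℤ) ^ i with hA
    set B := ∑ i ∈ Finset.range n, b (i + 1) * (p : ℤ) ^ i with hB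
    have hp' : (2 : ℤ) ≤ (p : ℤ) := by exact_mod_cast hp
    have h0 : a 0 = b 0 := by
      have hd : (p : ℤ) ∣ a 0 - b 0 := ⟨B - A, by linarith⟩
      have h1 := ha 0; have h2 := hb 0
      have := Int.eq_zero_of_abs_lt_dvd hd (by rw [abs_lt]; constructor <;> linarith)
      omega
    have hAB : A = B := by
      have : A * (p : ℤ) = B * (p : ℤ) := by omega
      exact mul_right_cancel₀ (by positivity) this
    have hih := ih (fun k => a (k + 1)) (fun k => b (k + 1)) (fun k => ha (k + 1))
      (fun k => hb (k + 1)) hAB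
    rcases k with _ | j
    · exact h0
    · exact hih j (by omega)

lemma getD_lt {I : List ℕ} (hIq : ∀ i ∈ I, i < q) (hq : 2 ≤ q) (k : ℕ) : I.getD k 0 < q := by
  by_cases h : k < I.length
  · rw [List.getD_eq_getElem _ _ h]
    exact hIq _ (List.getElem_mem h)
  · rw [List.getD_eq_default _ _ (by omega)]; omega

lemma getD_eq_of_tauStar_eq (hτ : IsRegularMap p q τ) (hq : 2 ≤ q) (hqp : q ≤ p)
    {I J : List ℕ} (hI : I ≠ []) (hIq : ∀ i ∈ I, i < q)
    (hJ : J ≠ []) (hJq : ∀ i ∈ J, i < q)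
    (h : tauStar p τ I = tauStar p τ J) : ∀ k, I.getD k 0 = J.getD k 0 := by
  obtain ⟨N₁, hN₁len, hN₁⟩ := exists_bound hτ hI hIq
  obtain ⟨N₂, hN₂len, hN₂⟩ := exists_bound hτ hJ hJq
  set N := max N₁ N₂ with hN
  have hsI : tauStar p τ I = ∑ k ∈ Finset.range N, τ (wTake I (k + 1)) * (p : ℤ) ^ k :=
    tauStar_eq_sum fun k hk => hN₁ k (by omega)
  have hsJ : tauStar p τ J = ∑ k ∈ Finset.range N, τ (wTake J (k + 1)) * (p : ℤ) ^ k :=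
    tauStar_eq_sum fun k hk => hN₂ k (by omega)
  have hdig := digits_unique (le_trans hq hqp) N (fun k => τ (wTake I (k + 1)))
    (fun k => τ (wTake J (k + 1)))
    (fun k => ⟨(coef_spec hτ hq hI hIq k).1, (coef_spec hτ hq hI hIq k).2.1⟩)
    (fun k => ⟨(coef_spec hτ hq hJ hJq k).1, (coef_spec hτ hq hJ hJq k).2.1⟩)
    (by rw [← hsI, ← hsJ, h])
  intro k
  by_cases hk : k < N
  · have h3I := (coef_spec hτ hq hI hIq k).2.2
    have h3J := (coef_spec hτ hq hJ hJq k).2.2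
    have heq := hdig k hk
    have hd : (q : ℤ) ∣ (I.getD k 0 : ℤ) - (J.getD k 0 : ℤ) := by
      rw [heq] at h3I
      have h2 := dvd_sub h3J h3I
      have e : τ (wTake J (k + 1)) - (J.getD k 0 : ℤ) -
          (τ (wTake J (k + 1)) - (I.getD k 0 : ℤ)) = (I.getD k 0 : ℤ) - (J.getD k 0 : ℤ) := by
        ring
      rwa [e] at h2
    have hIk := getD_lt hIq hq k
    have hJk := getD_lt hJq hq k
    have := Int.eq_zero_of_abs_lt_dvd hd (by rw [abs_lt]; constructor <;>
      [push_cast; push_cast] <;> omega)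
    omega
  · rw [List.getD_eq_default _ _ (by omega), List.getD_eq_default _ _ (by omega)]

end Aux

section Main

variable {p q : ℕ} {τ : List ℕ → ℤ}

lemma length_le_of_getD_eq {X Y : List ℕ} (hX : X ≠ []) (hlast : X.getLast! ≠ 0)
    (h : ∀ k, Y.getD k 0 = X.getD k 0) : X.length ≤ Y.length := by
  by_contra hlen
  push_neg at hlen
  have h1 : X.getD (X.length - 1) 0 ≠ 0 := by
    rw [← getLast!_eq_getD X hX]; exact hlast
  rw [← h] at h1
  have h2 : 0 < X.length := List.length_pos_iff.mpr hX
  exact h1 (List.getD_eq_default _ _ (by omega))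

lemma eq_of_getD_eq {I J : List ℕ} (hI : I ∈ GammaTau q) (hJ : J ∈ GammaTau q)
    (h : ∀ k, I.getD k 0 = J.getD k 0) : I = J := by
  rcases hI with ⟨hI1, _, hI3⟩ | hI0
  · rcases hJ with ⟨hJ1, _, hJ3⟩ | hJ0
    · -- both end in a nonzero letter
      have l1 : I.length ≤ J.length := length_le_of_getD_eq hI1 hI3 (fun k => (h k).symm)
      have l2 : J.length ≤ I.length := length_le_of_getD_eq hJ1 hJ3 h
      apply List.ext_getElem (by omega)
      intro n h1 h2
      rw [← List.getD_eq_getElem I (0 : ℕ) h1, ← List.getD_eq_getElem J (0 : ℕ) h2]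
      exact h n
    · -- J = [0]
      rw [Set.mem_singleton_iff] at hJ0; subst hJ0
      exfalso
      have l1 : I.length ≤ 1 := length_le_of_getD_eq hI1 hI3 (fun k => (h k).symm)
      have h0 : I.getLast! = I.getD 0 0 := by
        rw [getLast!_eq_getD I hI1]
        congr 1
        have := List.length_pos_iff.mpr hI1
        omega
      rw [h0, h 0] at hI3
      exact hI3 rfl
  · rw [Set.mem_singleton_iff] at hI0; subst hI0
    rcases hJ with ⟨hJ1, _, hJ3⟩ | hJ0
    · exfalso
      have l1 : J.length ≤ 1 := length_le_of_getD_eq hJ1 hJ3 h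
      have h0 : J.getLast! = J.getD 0 0 := by
        rw [getLast!_eq_getD J hJ1]
        congr 1
        have := List.length_pos_iff.mpr hJ1
        omega
      rw [h0, ← h 0] at hJ3
      exact hJ3 rfl
    · rw [Set.mem_singleton_iff] at hJ0; subst hJ0; rfl

lemma gamma_spec (hq : 2 ≤ q) {I : List ℕ} (hI : I ∈ GammaTau q) :
    I ≠ [] ∧ ∀ i ∈ I, i < q := by
  rcases hI with ⟨h1, h2, _⟩ | h0
  · exact ⟨h1, h2⟩
  · rw [Set.mem_singleton_iff] at h0; subst h0
    refine ⟨by simp, ?_⟩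
    intro i hi
    simp only [List.mem_singleton] at hi
    omega

private theorem tauStar_bijOn_GammaTau_aux
    (hq : 2 ≤ q) (hqp : q ≤ p) (hdvd : q ∣ p)
    (hτ : IsRegularMap p q τ) :
    Set.BijOn (fun I => (tauStar p τ I : ℝ)) (GammaTau q) (LambdaTau p q τ) := by
  have h0Γ : ([0] : List ℕ) ∈ GammaTau q := Or.inr rfl
  refine ⟨?_, ?_, ?_⟩
  · -- MapsTo
    intro I hI
    rcases hI with ⟨h1, h2, _⟩ | h0
    · exact Or.inl ⟨I, h1, h2, rfl⟩
    · rw [Set.mem_singleton_iff] at h0; subst h0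
      right
      simp [tauStar_single_zero hτ]
  · -- InjOn
    intro I hI J hJ heq
    obtain ⟨hI1, hI2⟩ := gamma_spec hq hI
    obtain ⟨hJ1, hJ2⟩ := gamma_spec hq hJ
    have heq' : ((tauStar p τ I : ℝ)) = ((tauStar p τ J : ℝ)) := heq
    have h' : tauStar p τ I = tauStar p τ J := by exact_mod_cast heq'
    exact eq_of_getD_eq hI hJ (getD_eq_of_tauStar_eq hτ hq hqp hI1 hI2 hJ1 hJ2 h')
  · -- SurjOn
    intro x hx
    rcases hx with ⟨I, hI1, hI2, rfl⟩ | hx0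
    · set T := I.reverse.takeWhile (· == 0) with hTdef
      set D := I.reverse.dropWhile (· == 0) with hDdef
      have hsplit : T ++ D = I.reverse := List.takeWhile_append_dropWhile
      have hT : T = List.replicate T.length 0 :=
        List.eq_replicate_of_mem (fun b hb => by
          have := List.mem_takeWhile_imp hb
          simpa using this)
      have hTrev : T.reverse = List.replicate T.length 0 := by
        conv_lhs => rw [hT]
        exact List.reverse_replicate
      have hI' : I = D.reverse ++ List.replicate T.length 0 := by
        conv_lhs => rw [← List.reverse_reverse I, ← hsplit]
        rw [List.reverse_append, hTrev]
      by_cases hD : D = []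
      · have hIrep : I = List.replicate T.length 0 := by
          rw [hI', hD]
          simp
        have hlen : 1 ≤ T.length := by
          rcases Nat.eq_zero_or_pos T.length with h | h
          · exfalso; apply hI1; rw [hIrep, h]; rfl
          · exact h
        refine ⟨[0], h0Γ, ?_⟩
        simp only
        rw [tauStar_single_zero hτ, hIrep, tauStar_zeros hτ _ hlen]
      · set J := D.reverse with hJdef
        have hJne : J ≠ [] := by simp [hJdef, hD]
        have hDne : I.reverse.dropWhile (· == 0) ≠ [] := by rw [← hDdef]; exact hD
        have hJlast : J.getLast! ≠ 0 := by
          have hhead := List.head_dropWhile_not (· == 0) hDne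
          have hJl : J.getLast! = D.head hD := by
            apply List.getLast!_of_getLast?
            rw [hJdef, List.getLast?_reverse, List.head?_eq_head hD]
          rw [hJl]
          simpa using hhead
        have hJq : ∀ i ∈ J, i < q := by
          intro i hi
          have hiD : i ∈ D := by rwa [hJdef, List.mem_reverse] at hi
          exact hI2 i (List.mem_reverse.mp ((List.dropWhile_sublist _).subset hiD))
        have hval : tauStar p τ I = tauStar p τ J := by
          rw [hI']
          exact tauStar_append_zeros J T.length
        exact ⟨J, Or.inl ⟨hJne, hJq, hJlast⟩, by simp only [hval]⟩
    · rw [Set.mem_singleton_iff] at hx0; subst hx0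
      exact ⟨[0], h0Γ, by simp [tauStar_single_zero hτ]⟩

end Main

/-- For every regular mapping `τ`, the map `τ*` restricted to `Γ(τ)` is a bijection from
`Γ(τ)` onto `Λ(τ)`. -/
theorem tauStar_bijOn_GammaTau
    (p q : ℕ) (hq : 2 ≤ q) (hqp : q ≤ p) (hdvd : q ∣ p)
    (τ : List ℕ → ℤ) (hτ : IsRegularMap p q τ) :
    Set.BijOn (fun I => (tauStar p τ I : ℝ)) (GammaTau q) (LambdaTau p q τ) :=
  tauStar_bijOn_GammaTau_aux hq hqp hdvd hτ
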